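/- arXiv:2109.01613 — 2 statements merged into one kernel-verified Lean document; each statement's English description precedes it below -/
import Mathlib

section
/- Let U, V, X, Y, Z be random variables on finite spaces forming a Markov chain U → V → X → (Y,Z). Then I(Y;V|U) − I(Z;V|U) + H(X|Z,V) = H(X|Z) − I(X;V|Y) + I(Z;U) − I(Y;U). -/
open scoped BigOperators Classical

variable {Ω : Type} [Fintype Ω]

/-- Probability that the random variable `X` takes the value `x` under the pmf `p`. -/
noncomputable def prEq {α : Type} (p : Ω → ℝ) (X : Ω → α) (x : α) : ℝ :=
  ∑ ω, if X ω = x then p ω else 0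

/-- Shannon entropy of a finite random variable. -/
noncomputable def ent {α : Type} [Fintype α] (p : Ω → ℝ) (X : Ω → α) : ℝ :=
  ∑ x, Real.negMulLog (prEq p X x)

/-- Conditional Shannon entropy `H(X | Y)`. -/
noncomputable def condEnt {α β : Type} [Fintype α] [Fintype β]
    (p : Ω → ℝ) (X : Ω → α) (Y : Ω → β) : ℝ :=
  ent p (fun ω => (X ω, Y ω)) - ent p Y

/-- Mutual information `I(X ; Y)`. -/
noncomputable def mutInf {α β : Type} [Fintype α] [Fintype β]
    (p : Ω → ℝ) (X : Ω → α) (Y : Ω → β) : ℝ :=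
  ent p X + ent p Y - ent p (fun ω => (X ω, Y ω))

/-- Conditional mutual information `I(X ; Y | Z)`. -/
noncomputable def condMutInf {α β γ : Type} [Fintype α] [Fintype β] [Fintype γ]
    (p : Ω → ℝ) (X : Ω → α) (Y : Ω → β) (Z : Ω → γ) : ℝ :=
  condEnt p X Z - condEnt p X (fun ω => (Y ω, Z ω))

/-- `X` and `Y` are conditionally independent given `Z`. -/
def CondIndep {α β γ : Type} (p : Ω → ℝ) (X : Ω → α) (Y : Ω → β) (Z : Ω → γ) : Prop :=
  ∀ x y z,
    prEq p (fun ω => (X ω, Y ω, Z ω)) (x, y, z) * prEq p Z z =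
      prEq p (fun ω => (X ω, Z ω)) (x, z) * prEq p (fun ω => (Y ω, Z ω)) (y, z)

/-- `X` and `Y` are independent. -/
def Indep {α β : Type} (p : Ω → ℝ) (X : Ω → α) (Y : Ω → β) : Prop :=
  ∀ x y, prEq p (fun ω => (X ω, Y ω)) (x, y) = prEq p X x * prEq p Y y

/-- `p` is a probability mass function on `Ω`. -/
def IsPMF (p : Ω → ℝ) : Prop := (∀ ω, 0 ≤ p ω) ∧ ∑ ω, p ω = 1

lemma prEq_nonneg {α : Type} {p : Ω → ℝ} (hp : ∀ ω, 0 ≤ p ω) (X : Ω → α) (x : α) :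
    0 ≤ prEq p X x := by
  apply Finset.sum_nonneg; intro ω _; split <;> simp [hp ω]

lemma prEq_comp {α β : Type} [Fintype α] (p : Ω → ℝ) (X : Ω → α) (f : α → β) (y : β) :
    prEq p (fun ω => f (X ω)) y = ∑ x, if f x = y then prEq p X x else 0 := by
  unfold prEq
  beta_reduce
  symm
  trans (∑ x, ∑ ω, (if f x = y ∧ X ω = x then p ω else 0))
  · exact Finset.sum_congr rfl fun x _ => by split <;> simp_all
  trans (∑ ω, ∑ x, (if f x = y ∧ X ω = x then p ω else 0))
  · exact Finset.sum_comm
  · refine Finset.sum_congr rfl fun ω _ => ?_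
    rw [Finset.sum_eq_single (X ω)]
    · by_cases h : f (X ω) = y <;> simp [h]
    · intro x _ hx
      simp only [ite_eq_right_iff]
      rintro ⟨-, h2⟩
      exact absurd h2.symm hx
    · simp

lemma prEq_le_comp {α β : Type} {p : Ω → ℝ} (hp : ∀ ω, 0 ≤ p ω) (X : Ω → α) (f : α → β) (x : α) :
    prEq p X x ≤ prEq p (fun ω => f (X ω)) (f x) := by
  apply Finset.sum_le_sum; intro ω _
  by_cases h : X ω = x
  · simp [h]
  · simp only [h, if_false]; split <;> simp [hp ω]

lemma ent_comp_expand {α β : Type} [Fintype α] [Fintype β] {p : Ω → ℝ}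
    (X : Ω → α) (f : α → β) :
    ent p (fun ω => f (X ω)) =
      -∑ x, prEq p X x * Real.log (prEq p (fun ω => f (X ω)) (f x)) := by
  have key : ∀ y, Real.negMulLog (prEq p (fun ω => f (X ω)) y) =
      ∑ x, if f x = y then -(prEq p X x * Real.log (prEq p (fun ω => f (X ω)) y)) else 0 := by
    intro y
    simp only [Real.negMulLog, neg_mul]
    nth_rewrite 1 [prEq_comp p X f y]
    rw [Finset.sum_mul, ← Finset.sum_neg_distrib]
    refine Finset.sum_congr rfl fun x _ => ?_
    split <;> simp
  unfold ent
  rw [Finset.sum_congr rfl fun y _ => key y, Finset.sum_comm, ← Finset.sum_neg_distrib]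
  refine Finset.sum_congr rfl fun x _ => ?_
  rw [Finset.sum_ite_eq Finset.univ (f x)
    (fun y => -(prEq p X x * Real.log (prEq p (fun ω => f (X ω)) y)))]
  simp

lemma condIndep_ent {α β γ : Type} [Fintype α] [Fintype β] [Fintype γ] {p : Ω → ℝ}
    (hp : ∀ ω, 0 ≤ p ω) {A : Ω → α} {B : Ω → β} {C : Ω → γ}
    (h : CondIndep p A B C) :
    ent p (fun ω => (A ω, B ω, C ω)) + ent p C =
      ent p (fun ω => (A ω, C ω)) + ent p (fun ω => (B ω, C ω)) := by
  classical
  set T : Ω → α × β × γ := fun ω => (A ω, B ω, C ω) with hT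
  have e0 : ent p T = -∑ t, prEq p T t * Real.log (prEq p T t) := by
    have := ent_comp_expand (p := p) T id
    simpa using this
  have eC : ent p C = -∑ t : α × β × γ, prEq p T t *
      Real.log (prEq p C t.2.2) := by
    have := ent_comp_expand (p := p) T (fun t => t.2.2)
    exact this
  have eAC : ent p (fun ω => (A ω, C ω)) = -∑ t : α × β × γ, prEq p T t *
      Real.log (prEq p (fun ω => (A ω, C ω)) (t.1, t.2.2)) := by
    have := ent_comp_expand (p := p) T (fun t => (t.1, t.2.2))
    exact this
  have eBC : ent p (fun ω => (B ω, C ω)) = -∑ t : α × β × γ, prEq p T t *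
      Real.log (prEq p (fun ω => (B ω, C ω)) t.2) := by
    have := ent_comp_expand (p := p) T (fun t => t.2)
    exact this
  rw [e0, eC, eAC, eBC, ← Finset.sum_neg_distrib, ← Finset.sum_neg_distrib,
    ← Finset.sum_neg_distrib, ← Finset.sum_neg_distrib,
    ← Finset.sum_add_distrib, ← Finset.sum_add_distrib]
  refine Finset.sum_congr rfl fun t _ => ?_
  obtain ⟨a, b, c⟩ := t
  by_cases hP : prEq p T (a, b, c) = 0
  · simp [hP]
  · have hPpos : 0 < prEq p T (a, b, c) :=
      lt_of_le_of_ne (prEq_nonneg hp T _) (Ne.symm hP)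
    have hPc : prEq p T (a, b, c) ≤ prEq p C c :=
      prEq_le_comp hp T (fun t => t.2.2) (a, b, c)
    have hPac : prEq p T (a, b, c) ≤ prEq p (fun ω => (A ω, C ω)) (a, c) :=
      prEq_le_comp hp T (fun t => (t.1, t.2.2)) (a, b, c)
    have hCpos : 0 < prEq p C c := lt_of_lt_of_le hPpos hPc
    have hACpos : 0 < prEq p (fun ω => (A ω, C ω)) (a, c) := lt_of_lt_of_le hPpos hPac
    have heq := h a b c
    have hBCnn : 0 ≤ prEq p (fun ω => (B ω, C ω)) (b, c) := prEq_nonneg hp _ _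
    have hBCpos : 0 < prEq p (fun ω => (B ω, C ω)) (b, c) := by
      rcases lt_or_eq_of_le hBCnn with h' | h'
      · exact h'
      · exfalso; nlinarith
    have hlog : Real.log (prEq p T (a, b, c)) + Real.log (prEq p C c) =
        Real.log (prEq p (fun ω => (A ω, C ω)) (a, c)) +
          Real.log (prEq p (fun ω => (B ω, C ω)) (b, c)) := by
      rw [← Real.log_mul hPpos.ne' hCpos.ne', ← Real.log_mul hACpos.ne' hBCpos.ne', heq]
    have expand : -(prEq p T (a, b, c) * Real.log (prEq p T (a, b, c))) +
        -(prEq p T (a, b, c) * Real.log (prEq p C c)) =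
        -(prEq p T (a, b, c) * Real.log (prEq p (fun ω => (A ω, C ω)) (a, c))) +
        -(prEq p T (a, b, c) * Real.log (prEq p (fun ω => (B ω, C ω)) (b, c))) := by
      nlinarith [hlog]
    exact expand

lemma prEq_comp_eq {α β : Type} {p : Ω → ℝ} {f : α → β}
    (hf : Function.Injective f) (X : Ω → α) (x : α) :
    prEq p (fun ω => f (X ω)) (f x) = prEq p X x := by
  unfold prEq
  refine Finset.sum_congr rfl fun ω _ => ?_
  simp [hf.eq_iff]


lemma ent_comp_inj {α β : Type} [Fintype α] [Fintype β] {f : α → β}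
    (hf : Function.Injective f) (p : Ω → ℝ) (X : Ω → α) :
    ent p (fun ω => f (X ω)) = ent p X := by
  unfold ent
  rw [← Finset.sum_subset (Finset.subset_univ (Finset.image f Finset.univ))
      (fun y _ hy => ?_), Finset.sum_image (fun a _ b _ h => hf h)]
  · exact Finset.sum_congr rfl fun x _ => by rw [prEq_comp_eq hf]
  · have : prEq p (fun ω => f (X ω)) y = 0 := by
      unfold prEq
      apply Finset.sum_eq_zero; intro ω _
      have : f (X ω) ≠ y := fun h => hy (Finset.mem_image.2 ⟨X ω, Finset.mem_univ _, h⟩)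
      simp [this]
    simp [this, Real.negMulLog]


lemma prEq_marg_mid {α β β' γ : Type} [Fintype β] (p : Ω → ℝ)
    (A : Ω → α) (B : Ω → β) (C : Ω → γ) (g : β → β') (a : α) (b' : β') (c : γ) :
    prEq p (fun ω => (A ω, g (B ω), C ω)) (a, b', c) =
      ∑ b, if g b = b' then prEq p (fun ω => (A ω, B ω, C ω)) (a, b, c) else 0 := by
  unfold prEq
  beta_reduce
  symm
  trans (∑ b, ∑ ω, (if g b = b' ∧ (A ω, B ω, C ω) = (a, b, c) then p ω else 0))
  · exact Finset.sum_congr rfl fun b _ => by split <;> simp_all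
  trans (∑ ω, ∑ b, (if g b = b' ∧ (A ω, B ω, C ω) = (a, b, c) then p ω else 0))
  · exact Finset.sum_comm
  · refine Finset.sum_congr rfl fun ω _ => ?_
    rw [Finset.sum_eq_single (B ω)]
    · by_cases h1 : A ω = a <;> by_cases h2 : g (B ω) = b' <;> by_cases h3 : C ω = c <;>
        simp [h1, h2, h3, Prod.ext_iff]
    · intro b _ hb
      simp only [Prod.mk.injEq, ite_eq_right_iff]
      rintro ⟨-, -, h, -⟩
      exact absurd h.symm hb
    · simp

lemma prEq_marg_fst {α α' γ : Type} [Fintype α] (p : Ω → ℝ)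
    (A : Ω → α) (C : Ω → γ) (g : α → α') (a' : α') (c : γ) :
    prEq p (fun ω => (g (A ω), C ω)) (a', c) =
      ∑ a, if g a = a' then prEq p (fun ω => (A ω, C ω)) (a, c) else 0 := by
  unfold prEq
  beta_reduce
  symm
  trans (∑ a, ∑ ω, (if g a = a' ∧ (A ω, C ω) = (a, c) then p ω else 0))
  · exact Finset.sum_congr rfl fun a _ => by split <;> simp_all
  trans (∑ ω, ∑ a, (if g a = a' ∧ (A ω, C ω) = (a, c) then p ω else 0))
  · exact Finset.sum_comm
  · refine Finset.sum_congr rfl fun ω _ => ?_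
    rw [Finset.sum_eq_single (A ω)]
    · by_cases h2 : g (A ω) = a' <;> by_cases h3 : C ω = c <;>
        simp [h2, h3, Prod.ext_iff]
    · intro a _ ha
      simp only [Prod.mk.injEq, ite_eq_right_iff]
      rintro ⟨-, h, -⟩
      exact absurd h.symm ha
    · simp

lemma prEq_marg3_fst {α α' β γ : Type} [Fintype α] (p : Ω → ℝ)
    (A : Ω → α) (B : Ω → β) (C : Ω → γ) (g : α → α') (a' : α') (b : β) (c : γ) :
    prEq p (fun ω => (g (A ω), B ω, C ω)) (a', b, c) =
      ∑ a, if g a = a' then prEq p (fun ω => (A ω, B ω, C ω)) (a, b, c) else 0 := by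
  unfold prEq
  beta_reduce
  symm
  trans (∑ a, ∑ ω, (if g a = a' ∧ (A ω, B ω, C ω) = (a, b, c) then p ω else 0))
  · exact Finset.sum_congr rfl fun a _ => by split <;> simp_all
  trans (∑ ω, ∑ a, (if g a = a' ∧ (A ω, B ω, C ω) = (a, b, c) then p ω else 0))
  · exact Finset.sum_comm
  · refine Finset.sum_congr rfl fun ω _ => ?_
    rw [Finset.sum_eq_single (A ω)]
    · by_cases h1 : g (A ω) = a' <;> by_cases h2 : B ω = b <;> by_cases h3 : C ω = c <;>
        simp [h1, h2, h3, Prod.ext_iff]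
    · intro a _ ha
      simp only [Prod.mk.injEq, ite_eq_right_iff]
      rintro ⟨-, h, -⟩
      exact absurd h.symm ha
    · simp

lemma condIndep_comp_right {α β β' γ : Type} [Fintype β] {p : Ω → ℝ}
    {A : Ω → α} {B : Ω → β} {C : Ω → γ} (h : CondIndep p A B C) (g : β → β') :
    CondIndep p A (fun ω => g (B ω)) C := by
  intro a b' c
  rw [prEq_marg_mid p A B C g, prEq_marg_fst p B C g, Finset.sum_mul, Finset.mul_sum]
  refine Finset.sum_congr rfl fun b _ => ?_
  by_cases hgb : g b = b'
  · simp only [hgb, if_true]; exact h a b c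
  · simp [hgb]

lemma condIndep_comp_left {α α' β γ : Type} [Fintype α] {p : Ω → ℝ}
    {A : Ω → α} {B : Ω → β} {C : Ω → γ} (h : CondIndep p A B C) (g : α → α') :
    CondIndep p (fun ω => g (A ω)) B C := by
  intro a' b c
  rw [prEq_marg3_fst p A B C g, prEq_marg_fst p A C g, Finset.sum_mul, Finset.sum_mul]
  refine Finset.sum_congr rfl fun a _ => ?_
  by_cases hga : g a = a'
  · simp only [hga, if_true]; exact h a b c
  · simp [hga]

theorem stmt0 {𝓤 𝓥 𝓧 𝓨 𝓩 : Type} [Fintype 𝓤] [Fintype 𝓥] [Fintype 𝓧] [Fintype 𝓨] [Fintype 𝓩]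
    (p : Ω → ℝ) (hp : IsPMF p)
    (U : Ω → 𝓤) (V : Ω → 𝓥) (X : Ω → 𝓧) (Y : Ω → 𝓨) (Z : Ω → 𝓩)
    (hmc1 : CondIndep p U (fun ω => (X ω, Y ω, Z ω)) V)
    (hmc2 : CondIndep p (fun ω => (U ω, V ω)) (fun ω => (Y ω, Z ω)) X) :
    condMutInf p Y V U - condMutInf p Z V U + condEnt p X (fun ω => (Z ω, V ω)) =
      condEnt p X Z - condMutInf p X V Y + mutInf p Z U - mutInf p Y U := by
  obtain ⟨hp0, -⟩ := hp
  have c1 : CondIndep p U Y V := condIndep_comp_right hmc1 (fun t => t.2.1)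
  have c2 : CondIndep p U Z V := condIndep_comp_right hmc1 (fun t => t.2.2)
  have cV : CondIndep p V (fun ω => (Y ω, Z ω)) X := condIndep_comp_left hmc2 Prod.snd
  have c3 : CondIndep p V Z X := condIndep_comp_right cV Prod.snd
  have c4 : CondIndep p V Y X := condIndep_comp_right cV Prod.fst
  have h1 : ent p (fun ω => (U ω, Y ω, V ω)) + ent p V =
      ent p (fun ω => (U ω, V ω)) + ent p (fun ω => (Y ω, V ω)) := condIndep_ent hp0 c1
  have h2 : ent p (fun ω => (U ω, Z ω, V ω)) + ent p V =
      ent p (fun ω => (U ω, V ω)) + ent p (fun ω => (Z ω, V ω)) := condIndep_ent hp0 c2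
  have h3 : ent p (fun ω => (V ω, Z ω, X ω)) + ent p X =
      ent p (fun ω => (V ω, X ω)) + ent p (fun ω => (Z ω, X ω)) := condIndep_ent hp0 c3
  have h4 : ent p (fun ω => (V ω, Y ω, X ω)) + ent p X =
      ent p (fun ω => (V ω, X ω)) + ent p (fun ω => (Y ω, X ω)) := condIndep_ent hp0 c4
  have e1 : ent p (fun ω => (Y ω, V ω, U ω)) = ent p (fun ω => (U ω, Y ω, V ω)) :=
    ent_comp_inj (f := fun t : 𝓤 × 𝓨 × 𝓥 => (t.2.1, t.2.2, t.1))
      (fun t t' h => by simp_all [Prod.ext_iff]) p (fun ω => (U ω, Y ω, V ω))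
  have e2 : ent p (fun ω => (Z ω, V ω, U ω)) = ent p (fun ω => (U ω, Z ω, V ω)) :=
    ent_comp_inj (f := fun t : 𝓤 × 𝓩 × 𝓥 => (t.2.1, t.2.2, t.1))
      (fun t t' h => by simp_all [Prod.ext_iff]) p (fun ω => (U ω, Z ω, V ω))
  have e3 : ent p (fun ω => (V ω, U ω)) = ent p (fun ω => (U ω, V ω)) :=
    ent_comp_inj (f := fun t : 𝓤 × 𝓥 => (t.2, t.1))
      (fun t t' h => by simp_all [Prod.ext_iff]) p (fun ω => (U ω, V ω))
  have e4 : ent p (fun ω => (X ω, Z ω, V ω)) = ent p (fun ω => (V ω, Z ω, X ω)) :=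
    ent_comp_inj (f := fun t : 𝓥 × 𝓩 × 𝓧 => (t.2.2, t.2.1, t.1))
      (fun t t' h => by simp_all [Prod.ext_iff]) p (fun ω => (V ω, Z ω, X ω))
  have e5 : ent p (fun ω => (X ω, Z ω)) = ent p (fun ω => (Z ω, X ω)) :=
    ent_comp_inj (f := fun t : 𝓩 × 𝓧 => (t.2, t.1))
      (fun t t' h => by simp_all [Prod.ext_iff]) p (fun ω => (Z ω, X ω))
  have e6 : ent p (fun ω => (X ω, V ω, Y ω)) = ent p (fun ω => (V ω, Y ω, X ω)) :=
    ent_comp_inj (f := fun t : 𝓥 × 𝓨 × 𝓧 => (t.2.2, t.1, t.2.1))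
      (fun t t' h => by simp_all [Prod.ext_iff]) p (fun ω => (V ω, Y ω, X ω))
  have e7 : ent p (fun ω => (X ω, Y ω)) = ent p (fun ω => (Y ω, X ω)) :=
    ent_comp_inj (f := fun t : 𝓨 × 𝓧 => (t.2, t.1))
      (fun t t' h => by simp_all [Prod.ext_iff]) p (fun ω => (Y ω, X ω))
  have e8 : ent p (fun ω => (V ω, Y ω)) = ent p (fun ω => (Y ω, V ω)) :=
    ent_comp_inj (f := fun t : 𝓨 × 𝓥 => (t.2, t.1))
      (fun t t' h => by simp_all [Prod.ext_iff]) p (fun ω => (Y ω, V ω))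
  simp only [condMutInf, condEnt, mutInf]
  linarith [h1, h2, h3, h4, e1, e2, e3, e4, e5, e6, e7, e8]
end

section
/- (Csiszár sum identity) Let (Y_1,…,Y_n), (Z_1,…,Z_n) be sequences of finite random variables and M any finite random variable on the same probability space. Then ∑_{i=1}^n I(Z_i; Y_{i+1}^n, M | Z^{i-1}) − ∑_{i=1}^n I(Y_i; Z^{i-1}, M | Y_{i+1}^n) = ∑_{i=1}^n I(Z_i; M | Z^{i-1}) − ∑_{i=1}^n I(Y_i; M | Y_{i+1}^n). -/
open scoped BigOperators Classical

variable {Ω : Type} [Fintype Ω]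

/-- The tuple `(Y_{i+1}, …, Y_n)`, encoded as an `Option`-masked vector. -/
def fut {n : ℕ} {α : Type} (Y : Fin n → Ω → α) (i : Fin n) : Ω → (Fin n → Option α) :=
  fun ω j => if i < j then some (Y j ω) else none

/-- The tuple `(Z_1, …, Z_{i-1})`, encoded as an `Option`-masked vector. -/
def past {n : ℕ} {α : Type} (Z : Fin n → Ω → α) (i : Fin n) : Ω → (Fin n → Option α) :=
  fun ω j => if j < i then some (Z j ω) else none

/-! ### Auxiliary machinery for the Csiszár sum identity -/

section CsiszarAux

lemma ent_eq_of_inj {α β : Type} [Fintype α] [Fintype β] (p : Ω → ℝ)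
    (X : Ω → α) (f : α → β) (hf : Function.Injective f) :
    ent p (fun ω => f (X ω)) = ent p X := by
  unfold ent
  have h0 : ∀ y ∈ (Finset.univ : Finset β), y ∉ Finset.univ.image f →
      Real.negMulLog (prEq p (fun ω => f (X ω)) y) = 0 := by
    intro y _ hy
    have hz : prEq p (fun ω => f (X ω)) y = 0 := by
      unfold prEq
      apply Finset.sum_eq_zero
      intro ω _
      rw [if_neg]
      intro h
      exact hy (Finset.mem_image.mpr ⟨X ω, Finset.mem_univ _, h⟩)
    rw [hz, Real.negMulLog_zero]
  calc ∑ y, Real.negMulLog (prEq p (fun ω => f (X ω)) y)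
      = ∑ y ∈ Finset.univ.image f, Real.negMulLog (prEq p (fun ω => f (X ω)) y) :=
        (Finset.sum_subset (Finset.subset_univ _) h0).symm
    _ = ∑ x, Real.negMulLog (prEq p (fun ω => f (X ω)) (f x)) :=
        Finset.sum_image (fun x _ y _ h => hf h)
    _ = ∑ x, Real.negMulLog (prEq p X x) := by
        apply Finset.sum_congr rfl
        intro x _
        congr 1
        unfold prEq
        apply Finset.sum_congr rfl
        intro ω _
        simp [hf.eq_iff]

lemma ent_pair_of_det {α β : Type} [Fintype α] [Fintype β] (p : Ω → ℝ)
    (X : Ω → α) (X' : Ω → β) (h : ∀ ω ω', X ω = X ω' → X' ω = X' ω') :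
    ent p (fun ω => (X ω, X' ω)) = ent p X := by
  classical
  set f : α → α × Option β := fun a =>
    (a, if h' : ∃ ω, X ω = a then some (X' h'.choose) else none) with hfdef
  have hf : Function.Injective f := fun a b hab => congrArg Prod.fst hab
  have e2 : (fun ω => f (X ω)) = fun ω => (X ω, some (X' ω)) := by
    funext ω
    have hex : ∃ ω', X ω' = X ω := ⟨ω, rfl⟩
    simp only [hfdef, dif_pos hex]
    exact congrArg _ (congrArg some (h _ _ hex.choose_spec))
  have hg : Function.Injective (fun q : α × β => (q.1, some q.2)) := by
    intro q r hqr
    simp only [Prod.mk.injEq, Option.some.injEq] at hqr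
    exact Prod.ext hqr.1 hqr.2
  calc ent p (fun ω => (X ω, X' ω))
      = ent p (fun ω => (X ω, some (X' ω))) :=
        (ent_eq_of_inj p (fun ω => (X ω, X' ω)) _ hg).symm
    _ = ent p X := by rw [← e2]; exact ent_eq_of_inj p X f hf

lemma ent_congr {α β : Type} [Fintype α] [Fintype β] (p : Ω → ℝ)
    (X : Ω → α) (X' : Ω → β)
    (h1 : ∀ ω ω', X ω = X ω' → X' ω = X' ω')
    (h2 : ∀ ω ω', X' ω = X' ω' → X ω = X ω') :
    ent p X = ent p X' := by
  have e1 := ent_pair_of_det p X X' h1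
  have e2 := ent_pair_of_det p X' X h2
  have e3 : ent p (fun ω => (X' ω, X ω)) = ent p (fun ω => (X ω, X' ω)) :=
    ent_eq_of_inj p (fun ω => (X ω, X' ω)) Prod.swap Prod.swap_injective
  rw [← e1, ← e3, e2]

variable {n : ℕ} {α : Type}

/-- `(Y_k, Y_{k+1}, …, Y_n)` as an `Option`-masked vector. -/
def cutY (Y : Fin n → Ω → α) (k : ℕ) : Ω → (Fin n → Option α) :=
  fun ω j => if k ≤ (j : ℕ) then some (Y j ω) else none

/-- `(Z_1, …, Z_{k-1})` as an `Option`-masked vector. -/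
def cutZ (Z : Fin n → Ω → α) (k : ℕ) : Ω → (Fin n → Option α) :=
  fun ω j => if (j : ℕ) < k then some (Z j ω) else none

lemma cutZ_succ_det (Z : Fin n → Ω → α) (i : Fin n) (ω ω' : Ω)
    (hz : Z i ω = Z i ω') (hP : cutZ Z (i : ℕ) ω = cutZ Z (i : ℕ) ω') :
    cutZ Z ((i : ℕ) + 1) ω = cutZ Z ((i : ℕ) + 1) ω' := by
  funext j
  simp only [cutZ]
  by_cases h1 : (j : ℕ) < (i : ℕ)
  · have h := congrFun hP j
    simp only [cutZ, if_pos h1] at h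
    rw [if_pos (by omega), if_pos (by omega)]
    exact h
  · by_cases h2 : (j : ℕ) = (i : ℕ)
    · have hji : j = i := Fin.ext h2
      subst hji
      rw [if_pos (by omega), if_pos (by omega)]
      exact congrArg some hz
    · rw [if_neg (by omega), if_neg (by omega)]

lemma cutZ_succ_inv1 (Z : Fin n → Ω → α) (i : Fin n) (ω ω' : Ω)
    (h : cutZ Z ((i : ℕ) + 1) ω = cutZ Z ((i : ℕ) + 1) ω') : Z i ω = Z i ω' := by
  have h' := congrFun h i
  simp only [cutZ] at h'
  rw [if_pos (by omega), if_pos (by omega)] at h'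
  exact Option.some.inj h'

lemma cutZ_succ_inv2 (Z : Fin n → Ω → α) (i : Fin n) (ω ω' : Ω)
    (h : cutZ Z ((i : ℕ) + 1) ω = cutZ Z ((i : ℕ) + 1) ω') :
    cutZ Z (i : ℕ) ω = cutZ Z (i : ℕ) ω' := by
  funext j
  simp only [cutZ]
  by_cases h1 : (j : ℕ) < (i : ℕ)
  · have h' := congrFun h j
    simp only [cutZ] at h'
    rw [if_pos (by omega), if_pos (by omega)] at h'
    rw [if_pos h1, if_pos h1]
    exact h'
  · rw [if_neg h1, if_neg h1]

lemma cutY_pred_det (Y : Fin n → Ω → α) (i : Fin n) (ω ω' : Ω)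
    (hy : Y i ω = Y i ω') (hF : cutY Y ((i : ℕ) + 1) ω = cutY Y ((i : ℕ) + 1) ω') :
    cutY Y (i : ℕ) ω = cutY Y (i : ℕ) ω' := by
  funext j
  simp only [cutY]
  by_cases h1 : (i : ℕ) + 1 ≤ (j : ℕ)
  · have h := congrFun hF j
    simp only [cutY, if_pos h1] at h
    rw [if_pos (by omega), if_pos (by omega)]
    exact h
  · by_cases h2 : (j : ℕ) = (i : ℕ)
    · have hji : j = i := Fin.ext h2
      subst hji
      rw [if_pos (by omega), if_pos (by omega)]
      exact congrArg some hy
    · rw [if_neg (by omega), if_neg (by omega)]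

lemma cutY_pred_inv1 (Y : Fin n → Ω → α) (i : Fin n) (ω ω' : Ω)
    (h : cutY Y (i : ℕ) ω = cutY Y (i : ℕ) ω') : Y i ω = Y i ω' := by
  have h' := congrFun h i
  simp only [cutY] at h'
  rw [if_pos (by omega), if_pos (by omega)] at h'
  exact Option.some.inj h'

lemma cutY_pred_inv2 (Y : Fin n → Ω → α) (i : Fin n) (ω ω' : Ω)
    (h : cutY Y (i : ℕ) ω = cutY Y (i : ℕ) ω') :
    cutY Y ((i : ℕ) + 1) ω = cutY Y ((i : ℕ) + 1) ω' := by
  funext j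
  simp only [cutY]
  by_cases h1 : (i : ℕ) + 1 ≤ (j : ℕ)
  · have h' := congrFun h j
    simp only [cutY] at h'
    rw [if_pos (by omega), if_pos (by omega)] at h'
    rw [if_pos h1, if_pos h1]
    exact h'
  · rw [if_neg h1, if_neg h1]

lemma cutZ_zero (Z : Fin n → Ω → α) (ω : Ω) : cutZ Z 0 ω = fun _ => none := by
  funext j; simp [cutZ]

lemma cutY_top (Y : Fin n → Ω → α) (ω : Ω) : cutY Y n ω = fun _ => none := by
  funext j; simp [cutY, Nat.not_le.mpr j.isLt]

end CsiszarAux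

section CsiszarMain

variable {n : ℕ} {𝓨 𝓩 𝓜 : Type} [Fintype 𝓨] [Fintype 𝓩] [Fintype 𝓜]

/-- `H(Y_{≥k}, Z_{<k}, M)`. -/
noncomputable def entA (p : Ω → ℝ) (Y : Fin n → Ω → 𝓨) (Z : Fin n → Ω → 𝓩)
    (M : Ω → 𝓜) (k : ℕ) : ℝ :=
  ent p (fun ω => (cutY Y k ω, cutZ Z k ω, M ω))

/-- `H(Z_{<k}, M)`. -/
noncomputable def entB (p : Ω → ℝ) (Z : Fin n → Ω → 𝓩) (M : Ω → 𝓜) (k : ℕ) : ℝ :=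
  ent p (fun ω => (cutZ Z k ω, M ω))

/-- `H(Y_{≥k}, M)`. -/
noncomputable def entC (p : Ω → ℝ) (Y : Fin n → Ω → 𝓨) (M : Ω → 𝓜) (k : ℕ) : ℝ :=
  ent p (fun ω => (cutY Y k ω, M ω))

end CsiszarMain

/-- Csiszár sum identity. -/
theorem stmt6 {n : ℕ} {𝓨 𝓩 𝓜 : Type} [Fintype 𝓨] [Fintype 𝓩] [Fintype 𝓜]
    (p : Ω → ℝ) (hp : IsPMF p)
    (Y : Fin n → Ω → 𝓨) (Z : Fin n → Ω → 𝓩) (M : Ω → 𝓜) :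
    (∑ i, condMutInf p (Z i) (fun ω => (fut Y i ω, M ω)) (past Z i)) -
        (∑ i, condMutInf p (Y i) (fun ω => (past Z i ω, M ω)) (fut Y i)) =
      (∑ i, condMutInf p (Z i) M (past Z i)) -
        (∑ i, condMutInf p (Y i) M (fut Y i)) := by
  classical
  -- `fut`/`past` coincide definitionally with the ℕ-indexed cuts
  have hfut : ∀ i : Fin n, fut Y i = cutY Y ((i : ℕ) + 1) := fun _ => rfl
  have hpast : ∀ i : Fin n, past Z i = cutZ Z (i : ℕ) := fun _ => rfl
  -- the per-index identity
  have key : ∀ i : Fin n,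
      (condMutInf p (Z i) (fun ω => (fut Y i ω, M ω)) (past Z i) -
        condMutInf p (Y i) (fun ω => (past Z i ω, M ω)) (fut Y i)) -
      (condMutInf p (Z i) M (past Z i) - condMutInf p (Y i) M (fut Y i)) =
      ((entB p Z M ((i : ℕ) + 1) - entB p Z M (i : ℕ)) +
        (entC p Y M ((i : ℕ) + 1) - entC p Y M (i : ℕ))) -
      (entA p Y Z M ((i : ℕ) + 1) - entA p Y Z M (i : ℕ)) := by
    intro i
    rw [hfut i, hpast i]
    simp only [condMutInf, condEnt]
    have e1 : ent p (fun ω => (Z i ω, ((cutY Y ((i : ℕ) + 1) ω, M ω), cutZ Z (i : ℕ) ω))) =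
        entA p Y Z M ((i : ℕ) + 1) := by
      apply ent_congr
      · intro ω ω' h
        simp only [Prod.mk.injEq] at h ⊢
        obtain ⟨hz, ⟨hF, hM⟩, hP⟩ := h
        exact ⟨hF, cutZ_succ_det Z i ω ω' hz hP, hM⟩
      · intro ω ω' h
        simp only [Prod.mk.injEq] at h ⊢
        obtain ⟨hF, hP, hM⟩ := h
        exact ⟨cutZ_succ_inv1 Z i ω ω' hP, ⟨hF, hM⟩, cutZ_succ_inv2 Z i ω ω' hP⟩
    have e2 : ent p (fun ω => ((cutZ Z (i : ℕ) ω, M ω), cutY Y ((i : ℕ) + 1) ω)) =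
        ent p (fun ω => ((cutY Y ((i : ℕ) + 1) ω, M ω), cutZ Z (i : ℕ) ω)) := by
      apply ent_congr
      · intro ω ω' h
        simp only [Prod.mk.injEq] at h ⊢
        obtain ⟨⟨hP, hM⟩, hF⟩ := h
        exact ⟨⟨hF, hM⟩, hP⟩
      · intro ω ω' h
        simp only [Prod.mk.injEq] at h ⊢
        obtain ⟨⟨hF, hM⟩, hP⟩ := h
        exact ⟨⟨hP, hM⟩, hF⟩
    have e3 : ent p (fun ω => (Z i ω, (M ω, cutZ Z (i : ℕ) ω))) =
        entB p Z M ((i : ℕ) + 1) := by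
      apply ent_congr
      · intro ω ω' h
        simp only [Prod.mk.injEq] at h ⊢
        obtain ⟨hz, hM, hP⟩ := h
        exact ⟨cutZ_succ_det Z i ω ω' hz hP, hM⟩
      · intro ω ω' h
        simp only [Prod.mk.injEq] at h ⊢
        obtain ⟨hP, hM⟩ := h
        exact ⟨cutZ_succ_inv1 Z i ω ω' hP, hM, cutZ_succ_inv2 Z i ω ω' hP⟩
    have e4 : ent p (fun ω => (M ω, cutZ Z (i : ℕ) ω)) = entB p Z M (i : ℕ) := by
      apply ent_congr
      · intro ω ω' h
        simp only [Prod.mk.injEq] at h ⊢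
        exact ⟨h.2, h.1⟩
      · intro ω ω' h
        simp only [Prod.mk.injEq] at h ⊢
        exact ⟨h.2, h.1⟩
    have e5 : ent p (fun ω => (Y i ω, ((cutZ Z (i : ℕ) ω, M ω), cutY Y ((i : ℕ) + 1) ω))) =
        entA p Y Z M (i : ℕ) := by
      apply ent_congr
      · intro ω ω' h
        simp only [Prod.mk.injEq] at h ⊢
        obtain ⟨hy, ⟨hP, hM⟩, hF⟩ := h
        exact ⟨cutY_pred_det Y i ω ω' hy hF, hP, hM⟩
      · intro ω ω' h
        simp only [Prod.mk.injEq] at h ⊢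
        obtain ⟨hF, hP, hM⟩ := h
        exact ⟨cutY_pred_inv1 Y i ω ω' hF, ⟨hP, hM⟩, cutY_pred_inv2 Y i ω ω' hF⟩
    have e6 : ent p (fun ω => (Y i ω, (M ω, cutY Y ((i : ℕ) + 1) ω))) =
        entC p Y M (i : ℕ) := by
      apply ent_congr
      · intro ω ω' h
        simp only [Prod.mk.injEq] at h ⊢
        obtain ⟨hy, hM, hF⟩ := h
        exact ⟨cutY_pred_det Y i ω ω' hy hF, hM⟩
      · intro ω ω' h
        simp only [Prod.mk.injEq] at h ⊢
        obtain ⟨hF, hM⟩ := h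
        exact ⟨cutY_pred_inv1 Y i ω ω' hF, hM, cutY_pred_inv2 Y i ω ω' hF⟩
    have e7 : ent p (fun ω => (M ω, cutY Y ((i : ℕ) + 1) ω)) = entC p Y M ((i : ℕ) + 1) := by
      apply ent_congr
      · intro ω ω' h
        simp only [Prod.mk.injEq] at h ⊢
        exact ⟨h.2, h.1⟩
      · intro ω ω' h
        simp only [Prod.mk.injEq] at h ⊢
        exact ⟨h.2, h.1⟩
    rw [e1, e2, e3, e4, e5, e6, e7]
    ring
  -- sum the per-index identity and telescope
  have sumkey :
      ((∑ i, condMutInf p (Z i) (fun ω => (fut Y i ω, M ω)) (past Z i)) -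
        (∑ i, condMutInf p (Y i) (fun ω => (past Z i ω, M ω)) (fut Y i))) -
      ((∑ i, condMutInf p (Z i) M (past Z i)) -
        (∑ i, condMutInf p (Y i) M (fut Y i))) =
      ((entB p Z M n - entB p Z M 0) + (entC p Y M n - entC p Y M 0)) -
        (entA p Y Z M n - entA p Y Z M 0) := by
    rw [← Finset.sum_sub_distrib, ← Finset.sum_sub_distrib, ← Finset.sum_sub_distrib]
    rw [Finset.sum_congr rfl (fun i _ => key i)]
    rw [Finset.sum_sub_distrib, Finset.sum_add_distrib]
    rw [Fin.sum_univ_eq_sum_range (fun k => entB p Z M (k + 1) - entB p Z M k) n,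
      Fin.sum_univ_eq_sum_range (fun k => entC p Y M (k + 1) - entC p Y M k) n,
      Fin.sum_univ_eq_sum_range (fun k => entA p Y Z M (k + 1) - entA p Y Z M k) n,
      Finset.sum_range_sub, Finset.sum_range_sub, Finset.sum_range_sub]
  -- boundary identifications
  have hA0 : entA p Y Z M (n := n) 0 = entC p Y M 0 := by
    unfold entA entC
    apply ent_congr
    · intro ω ω' h
      simp only [Prod.mk.injEq] at h ⊢
      exact ⟨h.1, h.2.2⟩
    · intro ω ω' h
      simp only [Prod.mk.injEq] at h ⊢
      exact ⟨h.1, by rw [cutZ_zero, cutZ_zero], h.2⟩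
  have hAn : entA p Y Z M n = entB p Z M n := by
    unfold entA entB
    apply ent_congr
    · intro ω ω' h
      simp only [Prod.mk.injEq] at h ⊢
      exact ⟨h.2.1, h.2.2⟩
    · intro ω ω' h
      simp only [Prod.mk.injEq] at h ⊢
      exact ⟨by rw [cutY_top, cutY_top], h.1, h.2⟩
  have hB0 : entB p Z M (n := n) 0 = ent p M := by
    unfold entB
    apply ent_congr
    · intro ω ω' h
      simp only [Prod.mk.injEq] at h
      exact h.2
    · intro ω ω' h
      simp only [Prod.mk.injEq]
      exact ⟨by rw [cutZ_zero, cutZ_zero], h⟩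
  have hCn : entC p Y M (n := n) n = ent p M := by
    unfold entC
    apply ent_congr
    · intro ω ω' h
      simp only [Prod.mk.injEq] at h
      exact h.2
    · intro ω ω' h
      simp only [Prod.mk.injEq]
      exact ⟨by rw [cutY_top, cutY_top], h⟩
  linarith [sumkey, hA0, hAn, hB0, hCn]
end
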